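/- arXiv:2504.07799 — 8 statements merged into one kernel-verified Lean document; each statement's English description precedes it below -/
import Mathlib

section
/- Let f : X → X be a continuous self-map of a compact metric space X. Then f has the mean ergodic shadowing property if and only if for every ε > 0 there is δ > 0 such that for every δ-ergodic pseudo orbit ξ = (x_j) there exists z ∈ X with \overline{d}({j ∈ ℕ : d(f^j(z), x_j) ≥ ε}) < ε. -/
open Filter Metric

open scoped Classical in
noncomputable def upperDens (A : Set ℕ) : ℝ :=
  Filter.limsup (fun n => (((Finset.range n).filter (· ∈ A)).card : ℝ) / n) Filter.atTop

open scoped Classical in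
noncomputable def lowerDens (A : Set ℕ) : ℝ :=
  Filter.liminf (fun n => (((Finset.range n).filter (· ∈ A)).card : ℝ) / n) Filter.atTop

open scoped Classical in
def DensityZero (A : Set ℕ) : Prop :=
  Filter.Tendsto (fun n => (((Finset.range n).filter (· ∈ A)).card : ℝ) / n)
    Filter.atTop (nhds 0)

noncomputable def cesaro (a : ℕ → ℝ) (n : ℕ) : ℝ := (∑ i ∈ Finset.range n, a i) / n

variable {X : Type*} [MetricSpace X]

def ErgodicPO (f : X → X) (δ : ℝ) (x : ℕ → X) : Prop :=
  DensityZero {j | δ ≤ dist (f (x j)) (x (j + 1))}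

def AvgPO (f : X → X) (δ : ℝ) (x : ℕ → X) : Prop :=
  ∃ N : ℕ, 0 < N ∧ ∀ n ≥ N, ∀ k : ℕ,
    (∑ j ∈ Finset.range n, dist (f (x (j + k))) (x (j + k + 1))) / n < δ

def WeakAsympAvgPO (f : X → X) (δ : ℝ) (x : ℕ → X) : Prop :=
  Filter.limsup (cesaro (fun j => dist (f (x j)) (x (j + 1)))) Filter.atTop < δ

def AsympAvgPO (f : X → X) (x : ℕ → X) : Prop :=
  Filter.Tendsto (cesaro (fun j => dist (f (x j)) (x (j + 1)))) Filter.atTop (nhds 0)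

def ShadowAvg (f : X → X) (ε : ℝ) (z : X) (x : ℕ → X) : Prop :=
  Filter.limsup (cesaro (fun j => dist (f^[j] z) (x j))) Filter.atTop < ε

def MeanErgodicShadowing (f : X → X) : Prop :=
  ∀ ε > (0:ℝ), ∃ δ > (0:ℝ), ∀ x : ℕ → X, ErgodicPO f δ x → ∃ z, ShadowAvg f ε z x

def AvgShadowing (f : X → X) : Prop :=
  ∀ ε > (0:ℝ), ∃ δ > (0:ℝ), ∀ x : ℕ → X, AvgPO f δ x → ∃ z, ShadowAvg f ε z x

def WeakAsympAvgShadowing (f : X → X) : Prop :=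
  ∀ ε > (0:ℝ), ∀ x : ℕ → X, AsympAvgPO f x → ∃ z, ShadowAvg f ε z x

def AlmostAsympAvgShadowing (f : X → X) : Prop :=
  ∀ ε > (0:ℝ), ∃ δ > (0:ℝ), ∀ x : ℕ → X, WeakAsympAvgPO f δ x → ∃ z, ShadowAvg f ε z x

def AsympAvgShadowing (f : X → X) : Prop :=
  ∀ x : ℕ → X, AsympAvgPO f x →
    ∃ z, Filter.Tendsto (cesaro (fun j => dist (f^[j] z) (x j))) Filter.atTop (nhds 0)

def MalphaShadowing (f : X → X) (α : ℝ) : Prop :=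
  ∀ ε > (0:ℝ), ∃ δ > (0:ℝ), ∀ x : ℕ → X, ErgodicPO f δ x →
    ∃ z, α < lowerDens {j | dist (f^[j] z) (x j) < ε}


open scoped Classical

private lemma cobound_of_nonneg {u : ℕ → ℝ} (h : ∀ n, 0 ≤ u n) :
    Filter.IsCoboundedUnder (· ≤ ·) Filter.atTop u := by
  exact (Filter.isBoundedUnder_of ⟨0, fun n => h n⟩ :
    Filter.IsBoundedUnder (· ≥ ·) Filter.atTop u).isCoboundedUnder_le

private lemma exists_dist_bound (X : Type*) [MetricSpace X] [CompactSpace X] :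
    ∃ C : ℝ, 0 ≤ C ∧ ∀ x y : X, dist x y ≤ C := by
  obtain ⟨C, hC⟩ := Metric.isBounded_iff.mp (isCompact_univ (X := X)).isBounded
  exact ⟨max C 0, le_max_right _ _, fun x y =>
    le_trans (hC (Set.mem_univ x) (Set.mem_univ y)) (le_max_left _ _)⟩

theorem stmt4 {X : Type*} [MetricSpace X] [CompactSpace X] (f : X → X)
    (hf : Continuous f) :
    MeanErgodicShadowing f ↔
      ∀ ε > (0:ℝ), ∃ δ > (0:ℝ), ∀ x : ℕ → X, ErgodicPO f δ x →
        ∃ z, upperDens {j | ε ≤ dist (f^[j] z) (x j)} < ε := by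
  obtain ⟨C, hC0, hC⟩ := exists_dist_bound X
  constructor
  · intro h ε hε
    obtain ⟨δ, hδ, hsh⟩ := h (ε ^ 2 / 2) (by positivity)
    refine ⟨δ, hδ, fun x hx => ?_⟩
    obtain ⟨z, hz⟩ := hsh x hx
    refine ⟨z, ?_⟩
    set d := fun j => dist (f^[j] z) (x j) with hd
    set dens := fun n => (((Finset.range n).filter
        (· ∈ {j | ε ≤ dist (f^[j] z) (x j)})).card : ℝ) / n with hdens
    have hdnn : ∀ n, 0 ≤ dens n := fun n => by positivity
    have hces_bdd : Filter.IsBoundedUnder (· ≤ ·) Filter.atTop (cesaro d) := by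
      refine Filter.isBoundedUnder_of ⟨C, fun n => ?_⟩
      rcases Nat.eq_zero_or_pos n with rfl | hn
      · simp [cesaro, hC0]
      · rw [cesaro, div_le_iff₀ (by positivity)]
        calc ∑ i ∈ Finset.range n, d i ≤ ∑ i ∈ Finset.range n, C :=
              Finset.sum_le_sum fun i _ => hC _ _
          _ = C * n := by simp [Finset.sum_const, Finset.card_range, nsmul_eq_mul, mul_comm]
    have hev : ∀ᶠ n in Filter.atTop, cesaro d n < ε ^ 2 / 2 :=
      Filter.eventually_lt_of_limsup_lt hz hces_bdd
    have hpt : ∀ n, dens n ≤ cesaro d n / ε := by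
      intro n
      rcases Nat.eq_zero_or_pos n with rfl | hn
      · simp [cesaro, hdens]
      have hmark : ε * (((Finset.range n).filter
          (· ∈ {j | ε ≤ dist (f^[j] z) (x j)})).card : ℝ) ≤ ∑ i ∈ Finset.range n, d i := by
        calc ε * (((Finset.range n).filter
              (· ∈ {j | ε ≤ dist (f^[j] z) (x j)})).card : ℝ)
            = ∑ _i ∈ (Finset.range n).filter
                (· ∈ {j | ε ≤ dist (f^[j] z) (x j)}), ε := by
              rw [Finset.sum_const]; push_cast; ring
          _ ≤ ∑ i ∈ (Finset.range n).filter
                (· ∈ {j | ε ≤ dist (f^[j] z) (x j)}), d i := by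
              refine Finset.sum_le_sum fun i hi => ?_
              have := (Finset.mem_filter.mp hi).2
              simpa [hd] using this
          _ ≤ ∑ i ∈ Finset.range n, d i :=
              Finset.sum_le_sum_of_subset_of_nonneg (Finset.filter_subset _ _)
                (fun i _ _ => dist_nonneg)
      rw [hdens, cesaro, div_div, div_le_div_iff₀ (by positivity) (by positivity)]
      calc (((Finset.range n).filter
            (· ∈ {j | ε ≤ dist (f^[j] z) (x j)})).card : ℝ) * ((n : ℝ) * ε)
          = (ε * ((Finset.range n).filter
              (· ∈ {j | ε ≤ dist (f^[j] z) (x j)})).card) * n := by ring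
        _ ≤ (∑ i ∈ Finset.range n, d i) * n :=
            mul_le_mul_of_nonneg_right hmark (Nat.cast_nonneg n)
    have hev2 : ∀ᶠ n in Filter.atTop, dens n ≤ ε / 2 := by
      filter_upwards [hev] with n hn
      have hn' := hn.le
      calc dens n ≤ cesaro d n / ε := hpt n
        _ ≤ (ε ^ 2 / 2) / ε := by gcongr
        _ = ε / 2 := by field_simp
    have : upperDens {j | ε ≤ dist (f^[j] z) (x j)} ≤ ε / 2 :=
      Filter.limsup_le_of_le (cobound_of_nonneg hdnn) hev2
    linarith
  · intro h ε hε
    obtain ⟨δ, hδ, hsh⟩ := h (ε / (C + 2)) (by positivity)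
    refine ⟨δ, hδ, fun x hx => ?_⟩
    obtain ⟨z, hz⟩ := hsh x hx
    refine ⟨z, ?_⟩
    set ε' := ε / (C + 2) with hε'
    have hε'pos : 0 < ε' := by positivity
    set d := fun j => dist (f^[j] z) (x j) with hd
    set dens := fun n => (((Finset.range n).filter
        (· ∈ {j | ε' ≤ dist (f^[j] z) (x j)})).card : ℝ) / n with hdens
    have hdens_bdd : Filter.IsBoundedUnder (· ≤ ·) Filter.atTop dens := by
      refine Filter.isBoundedUnder_of ⟨1, fun n => ?_⟩
      rcases Nat.eq_zero_or_pos n with rfl | hn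
      · simp [hdens]
      rw [hdens, div_le_one (by positivity)]
      exact_mod_cast (Finset.card_le_card (Finset.filter_subset _ _)).trans_eq
        (Finset.card_range n)
    have hev : ∀ᶠ n in Filter.atTop, dens n < ε' :=
      Filter.eventually_lt_of_limsup_lt hz hdens_bdd
    have hpt : ∀ n, cesaro d n ≤ ε' + C * dens n := by
      intro n
      rcases Nat.eq_zero_or_pos n with rfl | hn
      · simp [cesaro, hdens]
        positivity
      have hsplit : ∑ i ∈ Finset.range n, d i ≤
          C * (((Finset.range n).filter
            (· ∈ {j | ε' ≤ dist (f^[j] z) (x j)})).card : ℝ) + n * ε' := by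
        rw [← Finset.sum_filter_add_sum_filter_not (Finset.range n)
          (· ∈ {j | ε' ≤ dist (f^[j] z) (x j)}) d]
        gcongr ?_ + ?_
        · calc ∑ i ∈ (Finset.range n).filter
                (· ∈ {j | ε' ≤ dist (f^[j] z) (x j)}), d i
              ≤ ∑ _i ∈ (Finset.range n).filter
                (· ∈ {j | ε' ≤ dist (f^[j] z) (x j)}), C :=
                Finset.sum_le_sum fun i _ => hC _ _
            _ = C * _ := by rw [Finset.sum_const]; push_cast; ring
        · calc ∑ i ∈ (Finset.range n).filter
                (¬ · ∈ {j | ε' ≤ dist (f^[j] z) (x j)}), d i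
              ≤ ∑ _i ∈ (Finset.range n).filter
                (¬ · ∈ {j | ε' ≤ dist (f^[j] z) (x j)}), ε' := by
                refine Finset.sum_le_sum fun i hi => ?_
                have := (Finset.mem_filter.mp hi).2
                simp only [Set.mem_setOf_eq, not_le] at this
                exact le_of_lt this
            _ = (((Finset.range n).filter
                (¬ · ∈ {j | ε' ≤ dist (f^[j] z) (x j)})).card : ℝ) * ε' := by
                rw [Finset.sum_const]; push_cast; ring
            _ ≤ n * ε' := by
                gcongr
                exact_mod_cast (Finset.card_le_card (Finset.filter_subset _ _)).trans_eq
                  (Finset.card_range n)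
      rw [cesaro, div_le_iff₀ (by positivity)]
      calc ∑ i ∈ Finset.range n, d i
          ≤ C * (((Finset.range n).filter
              (· ∈ {j | ε' ≤ dist (f^[j] z) (x j)})).card : ℝ) + n * ε' := hsplit
        _ = (ε' + C * dens n) * n := by
            rw [hdens]; field_simp; ring
    have hev2 : ∀ᶠ n in Filter.atTop, cesaro d n ≤ ε' + C * ε' := by
      filter_upwards [hev] with n hn
      calc cesaro d n ≤ ε' + C * dens n := hpt n
        _ ≤ ε' + C * ε' := by nlinarith [hn]
    have hle : Filter.limsup (cesaro d) Filter.atTop ≤ ε' + C * ε' :=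
      Filter.limsup_le_of_le (cobound_of_nonneg fun n => by
        rw [cesaro]; positivity) hev2
    have : ε' + C * ε' < ε := by
      have h1 : ε' * (C + 2) = ε := by rw [hε']; field_simp
      nlinarith [hε'pos]
    exact lt_of_le_of_lt hle this
end

section
/- Let X be a compact metric space and f : X → X continuous. For any δ > 0 and any (δ/2)-ergodic pseudo orbit (x_i)_{i∈ℕ} for f, there exists a δ-average pseudo orbit (y_i)_{i∈ℕ} such that the set {i ∈ ℕ : x_i ≠ y_i} has natural density zero. -/
open Filter Metric

variable {X : Type*} [MetricSpace X]

open scoped Classical in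
noncomputable def modSeq {X : Type*} (f : X → X) (x : ℕ → X) (B : ℕ → Prop) : ℕ → X
  | 0 => x 0
  | (i+1) => if B i then f (modSeq f x B i) else x (i + 1)

theorem stmt5 {X : Type*} [MetricSpace X] [CompactSpace X] (f : X → X)
    (hf : Continuous f) (δ : ℝ) (hδ : 0 < δ) (x : ℕ → X) (hx : ErgodicPO f (δ / 2) x) :
    ∃ y : ℕ → X, AvgPO f δ y ∧ DensityZero {i | x i ≠ y i} := by
  classical
  -- a uniform bound on distances
  obtain ⟨C, hC⟩ : ∃ C, ∀ a b : X, dist a b ≤ C := by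
    obtain ⟨C, hC⟩ := Metric.isBounded_iff.mp
      (isCompact_univ : IsCompact (Set.univ : Set X)).isBounded
    exact ⟨C, fun a b => hC (Set.mem_univ a) (Set.mem_univ b)⟩
  have hC0 : 0 ≤ C := le_trans dist_nonneg (hC (x 0) (x 0))
  -- the gap size
  set G : ℕ := ⌈4 * C / δ⌉₊ + 1 with hGdef
  have hG1 : 1 ≤ G := Nat.le_add_left 1 _
  have hG0R : (0:ℝ) < (G:ℝ) := by positivity
  have hGC : C < δ / 4 * G := by
    have h1 : 4 * C / δ < (G : ℝ) := by
      have := Nat.le_ceil (4 * C / δ)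
      have : (4 * C / δ : ℝ) ≤ (⌈4 * C / δ⌉₊ : ℝ) := this
      have h2 : ((⌈4 * C / δ⌉₊ : ℕ) : ℝ) < (G : ℝ) := by
        rw [hGdef]; push_cast; linarith
      linarith
    have := (div_lt_iff₀ hδ).mp h1
    nlinarith
  set A : Set ℕ := {j | δ / 2 ≤ dist (f (x j)) (x (j + 1))} with hAdef
  have hxA : DensityZero A := hx
  set B : ℕ → Prop := fun j => ∃ a, a ∈ A ∧ a ≤ j ∧ j < a + G with hBdef
  have hAB : ∀ j, j ∈ A → B j := fun j hj => ⟨j, hj, le_refl j, by omega⟩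
  set y : ℕ → X := modSeq f x B with hydef
  have hy0 : y 0 = x 0 := rfl
  have hyB : ∀ i, B i → y (i + 1) = f (y i) := by
    intro i hi
    show modSeq f x B (i + 1) = _
    rw [modSeq, if_pos hi]
  have hyNB : ∀ i, ¬ B i → y (i + 1) = x (i + 1) := by
    intro i hi
    show modSeq f x B (i + 1) = _
    rw [modSeq, if_neg hi]
  have hyx : ∀ i, ¬ (∃ m, i = m + 1 ∧ B m) → y i = x i := by
    intro i hi
    match i with
    | 0 => rfl
    | (m+1) =>
      have : ¬ B m := fun h => hi ⟨m, rfl, h⟩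
      exact hyNB m this
  -- reset indices
  set R : ℕ → Prop := fun j => ¬ B j ∧ ∃ m, j = m + 1 ∧ B m with hRdef
  -- pointwise bound on jumps
  have hd : ∀ j, dist (f (y j)) (y (j + 1)) ≤ if R j then C else δ / 2 := by
    intro j
    by_cases hBj : B j
    · rw [hyB j hBj, dist_self]
      split <;> [exact hC0; positivity]
    · by_cases hRj : R j
      · rw [if_pos hRj]; exact hC _ _
      · rw [if_neg hRj]
        have hnot : ¬ (∃ m, j = m + 1 ∧ B m) := fun h => hRj ⟨hBj, h⟩
        rw [hyNB j hBj, hyx j hnot]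
        have hjA : j ∉ A := fun h => hBj (hAB j h)
        have : ¬ (δ / 2 ≤ dist (f (x j)) (x (j + 1))) := hjA
        linarith [not_le.mp this]
  -- separation of resets
  have hsep : ∀ r r', R r → R r' → r < r' → r + G < r' := by
    intro r r' ⟨hBr, _⟩ ⟨hBr', m, hm, hBm⟩ hlt
    obtain ⟨a, haA, ham, hma⟩ := hBm
    have hra : r < a := by
      by_contra h
      push_neg at h
      have : ¬ (r < a + G) := fun hr => hBr ⟨a, haA, h, hr⟩
      omega
    have hr'a : ¬ (a ≤ r' ∧ r' < a + G) := fun ⟨h1, h2⟩ => hBr' ⟨a, haA, h1, h2⟩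
    omega
  -- counting resets in a window
  have hcount : ∀ n k, ((Finset.range n).filter (fun j => R (j + k))).card ≤ n / G + 1 := by
    intro n k
    have key : ((Finset.range n).filter (fun j => R (j + k))).card
        ≤ (Finset.range (n / G + 1)).card := by
      apply Finset.card_le_card_of_injOn (fun j => j / G)
      · intro j hj
        simp only [Finset.mem_coe, Finset.mem_filter, Finset.mem_range] at hj
        simp only [Finset.mem_coe, Finset.mem_range]
        have := Nat.div_le_div_right (c := G) (le_of_lt hj.1)
        omega
      · intro i hi j hj hij
        simp only [Finset.coe_filter, Set.mem_setOf_eq, Finset.mem_range] at hi hj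
        simp only at hij
        by_contra hne
        rcases Nat.lt_or_ge i j with h | h
        · have := hsep (i + k) (j + k) hi.2 hj.2 (by omega)
          have h2 : (i + G) / G ≤ j / G := Nat.div_le_div_right (by omega)
          rw [Nat.add_div_right i (by omega)] at h2
          omega
        · have h' : j < i := by omega
          have := hsep (j + k) (i + k) hj.2 hi.2 (by omega)
          have h2 : (j + G) / G ≤ i / G := Nat.div_le_div_right (by omega)
          rw [Nat.add_div_right j (by omega)] at h2
          omega
    simpa using key
  refine ⟨y, ⟨G, by omega, ?_⟩, ?_⟩
  · -- AvgPO
    intro n hn k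
    have hn0 : 0 < n := lt_of_lt_of_le (by omega) hn
    have hn0R : (0:ℝ) < (n:ℝ) := by exact_mod_cast hn0
    rw [div_lt_iff₀ hn0R]
    calc (∑ j ∈ Finset.range n, dist (f (y (j + k))) (y (j + k + 1)))
        ≤ ∑ j ∈ Finset.range n, (if R (j + k) then C else δ / 2) :=
          Finset.sum_le_sum (fun j _ => hd (j + k))
      _ = ((Finset.range n).filter (fun j => R (j + k))).card * C
          + ((Finset.range n).filter (fun j => ¬ R (j + k))).card * (δ / 2) := by
          rw [Finset.sum_ite, Finset.sum_const, Finset.sum_const, nsmul_eq_mul, nsmul_eq_mul]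
      _ < δ * n := by
          have h1 : (((Finset.range n).filter (fun j => R (j + k))).card : ℝ)
              ≤ ((n / G : ℕ) : ℝ) + 1 := by
            have := hcount n k
            exact_mod_cast this
          have h2 : (((Finset.range n).filter (fun j => ¬ R (j + k))).card : ℝ) ≤ n := by
            have := Finset.card_filter_le (Finset.range n) (fun j => ¬ R (j + k))
            rw [Finset.card_range] at this
            exact_mod_cast this
          have h3 : ((n / G : ℕ) : ℝ) ≤ (n : ℝ) / (G : ℝ) := Nat.cast_div_le
          have h4 : (n : ℝ) / (G : ℝ) * C ≤ (n : ℝ) * (δ / 4) := by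
            rw [div_mul_eq_mul_div, div_le_iff₀ hG0R]
            nlinarith
          have h5 : C < (n : ℝ) * (δ / 4) := by
            have hGn : (G : ℝ) ≤ (n : ℝ) := by exact_mod_cast hn
            nlinarith
          have hcard0 : (0:ℝ) ≤ (((Finset.range n).filter (fun j => R (j + k))).card : ℝ) :=
            Nat.cast_nonneg _
          nlinarith [mul_le_mul_of_nonneg_right h1 hC0,
            mul_le_mul_of_nonneg_right h3 hC0,
            mul_le_mul_of_nonneg_right h2 (by positivity : (0:ℝ) ≤ δ / 2)]
  · -- DensityZero of the difference set
    have hsub : ∀ n, ((Finset.range n).filter (· ∈ {i | x i ≠ y i})).card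
        ≤ (G + 1) * ((Finset.range n).filter (· ∈ A)).card := by
      intro n
      have hsubset : (Finset.range n).filter (· ∈ {i | x i ≠ y i})
          ⊆ (Finset.range (G + 1)).biUnion
            (fun t => ((Finset.range n).filter (· ∈ A)).image (· + t)) := by
        intro i hi
        simp only [Finset.mem_filter, Finset.mem_range, Set.mem_setOf_eq] at hi
        obtain ⟨hin, hne⟩ := hi
        have hB : ∃ m, i = m + 1 ∧ B m := by
          by_contra h
          exact hne (hyx i h).symm
        obtain ⟨m, rfl, a, haA, ham, hma⟩ := hB
        simp only [Finset.mem_biUnion, Finset.mem_range, Finset.mem_image, Finset.mem_filter]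
        exact ⟨m + 1 - a, by omega, a, ⟨by omega, haA⟩, by omega⟩
      calc ((Finset.range n).filter (· ∈ {i | x i ≠ y i})).card
          ≤ _ := Finset.card_le_card hsubset
        _ ≤ ∑ t ∈ Finset.range (G + 1),
              (((Finset.range n).filter (· ∈ A)).image (· + t)).card :=
            Finset.card_biUnion_le
        _ ≤ ∑ _t ∈ Finset.range (G + 1), ((Finset.range n).filter (· ∈ A)).card :=
            Finset.sum_le_sum (fun t _ => Finset.card_image_le)
        _ = (G + 1) * ((Finset.range n).filter (· ∈ A)).card := by
            rw [Finset.sum_const, Finset.card_range, smul_eq_mul]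
    have hlim : Filter.Tendsto
        (fun n => ((G:ℝ) + 1) * ((((Finset.range n).filter (· ∈ A)).card : ℝ) / n))
        Filter.atTop (nhds 0) := by
      have := hxA.const_mul ((G:ℝ) + 1)
      simpa using this
    apply squeeze_zero (fun n => div_nonneg (Nat.cast_nonneg _) (Nat.cast_nonneg _)) _ hlim
    intro n
    have hcast : (((Finset.range n).filter (· ∈ {i | x i ≠ y i})).card : ℝ)
        ≤ ((G:ℝ) + 1) * (((Finset.range n).filter (· ∈ A)).card : ℝ) := by
      exact_mod_cast hsub n
    rw [mul_div_assoc']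
    gcongr
    convert hcast using 4 <;> rfl
end

section
/- Let X be a compact metric space and f : X → X continuous. If f has the almost asymptotic average shadowing property, then f has the mean ergodic shadowing property. -/
open Filter Metric

variable {X : Type*} [MetricSpace X]

/-! A δ/2-ergodic pseudo orbit in a bounded space has jumps of size at most `diam X` on a set of
density zero and jumps below δ/2 elsewhere, so its Cesàro mean of jumps is eventually below δ:
it is a δ-weak asymptotic average pseudo orbit, which the almost asymptotic average shadowing
property shadows on average. -/

section Cesaro

variable {a b : ℕ → ℝ}

theorem cesaro_mono (h : ∀ j, a j ≤ b j) (n : ℕ) : cesaro a n ≤ cesaro b n :=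
  div_le_div_of_nonneg_right (Finset.sum_le_sum fun j _ => h j) n.cast_nonneg

theorem cesaro_nonneg (ha : ∀ j, 0 ≤ a j) (n : ℕ) : 0 ≤ cesaro a n :=
  div_nonneg (Finset.sum_nonneg fun j _ => ha j) n.cast_nonneg

open scoped Classical in
theorem cesaro_le_mul_density_add {A : Set ℕ} {c D : ℝ} (hc : 0 ≤ c) (hD : ∀ j ∈ A, a j ≤ D)
    (hA : ∀ j ∉ A, a j ≤ c) (n : ℕ) :
    cesaro a n ≤ D * ((((Finset.range n).filter (· ∈ A)).card : ℝ) / n) + c := by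
  have hpt : ∀ j, a j ≤ D * (if j ∈ A then 1 else 0) + c := by
    intro j
    by_cases hj : j ∈ A
    · simpa [hj] using (hD j hj).trans (le_add_of_nonneg_right hc)
    · simpa [hj] using hA j hj
  rcases Nat.eq_zero_or_pos n with rfl | hn
  · simpa [cesaro] using hc
  · refine (cesaro_mono hpt n).trans_eq ?_
    have hn : (n : ℝ) ≠ 0 := by positivity
    simp only [cesaro, Finset.sum_add_distrib, ← Finset.mul_sum, Finset.sum_boole,
      Finset.sum_const, Finset.card_range, nsmul_eq_mul]
    field_simp

theorem limsup_cesaro_le_of_densityZero {c D : ℝ} (hc : 0 ≤ c) (ha : ∀ j, 0 ≤ a j)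
    (hD : ∀ j, a j ≤ D) (hdens : DensityZero {j | c ≤ a j}) :
    limsup (cesaro a) atTop ≤ c := by
  have hbound : Tendsto (fun n => D * ((((Finset.range n).filter
      (· ∈ {j | c ≤ a j})).card : ℝ) / n) + c) atTop (nhds c) := by
    simpa using (hdens.const_mul D).add_const c
  rw [← hbound.limsup_eq]
  refine limsup_le_limsup (Eventually.of_forall fun n =>
    cesaro_le_mul_density_add hc (fun j _ => hD j) (fun j hj => (not_le.mp hj).le) n) ?_
    hbound.isBoundedUnder_le
  exact isCoboundedUnder_le_of_le atTop (cesaro_nonneg ha)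

end Cesaro

theorem ErgodicPO.weakAsympAvgPO [BoundedSpace X] {f : X → X}
    {δ δ' : ℝ} {x : ℕ → X} (hδ : 0 ≤ δ) (hδδ' : δ < δ') (hx : ErgodicPO f δ x) :
    WeakAsympAvgPO f δ' x :=
  (limsup_cesaro_le_of_densityZero hδ (fun _ => dist_nonneg)
    (fun _ => dist_le_diam_of_mem BoundedSpace.bounded_univ trivial trivial) hx).trans_lt
    hδδ'

theorem stmt6_general {X : Type*} [MetricSpace X] [CompactSpace X] (f : X → X)
    (h : AlmostAsympAvgShadowing f) : MeanErgodicShadowing f := by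
  intro ε hε
  obtain ⟨δ, hδ, hshadow⟩ := h ε hε
  exact ⟨δ / 2, half_pos hδ, fun x hx =>
    hshadow x (hx.weakAsympAvgPO (half_pos hδ).le (half_lt_self hδ))⟩

theorem stmt6 {X : Type*} [MetricSpace X] [CompactSpace X] (f : X → X)
    (hf : Continuous f) (h : AlmostAsympAvgShadowing f) : MeanErgodicShadowing f :=
  stmt6_general f h
end

section
/- Let X be a compact metric space and f : X → X continuous. If f has the mean ergodic shadowing property, then f has the weak asymptotic average shadowing property. -/
open Filter Metric

variable {X : Type*} [MetricSpace X]

/-! By Markov's inequality the proportion of times `j < n` with jump `d(f x_j, x_{j+1}) ≥ δ` is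
at most the `n`-th Cesàro mean of the jumps divided by `δ`, so an asymptotic average pseudo orbit
is a `δ`-ergodic pseudo orbit for every `δ > 0`, and mean ergodic shadowing applies to it. -/

open Finset

theorem card_filter_mul_le_sum {a : ℕ → ℝ} (ha : ∀ j, 0 ≤ a j) (δ : ℝ) (n : ℕ) :
    #{j ∈ range n | j ∈ {j | δ ≤ a j}} * δ ≤ ∑ j ∈ range n, a j :=
  calc #{j ∈ range n | j ∈ {j | δ ≤ a j}} * δ
      = #{j ∈ range n | j ∈ {j | δ ≤ a j}} • δ := (nsmul_eq_mul _ _).symm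
    _ ≤ ∑ j ∈ range n with j ∈ {j | δ ≤ a j}, a j :=
        card_nsmul_le_sum _ a δ fun _ hj => (mem_filter.mp hj).2
    _ ≤ ∑ j ∈ range n, a j := sum_le_sum_of_subset_of_nonneg (filter_subset _ _) fun j _ _ => ha j

theorem densityZero_of_tendsto_cesaro {a : ℕ → ℝ} (ha : ∀ j, 0 ≤ a j)
    (h : Tendsto (cesaro a) atTop (nhds 0)) {δ : ℝ} (hδ : 0 < δ) :
    DensityZero {j | δ ≤ a j} := by
  have hbound (n : ℕ) : (#{j ∈ range n | j ∈ {j | δ ≤ a j}} : ℝ) / n ≤ cesaro a n / δ := by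
    rw [cesaro, div_right_comm]
    refine div_le_div_of_nonneg_right ?_ n.cast_nonneg
    rw [le_div_iff₀ hδ]
    exact card_filter_mul_le_sum ha δ n
  have hlim : Tendsto (fun n => cesaro a n / δ) atTop (nhds 0) := by simpa using h.div_const δ
  exact squeeze_zero (fun n => by positivity) hbound hlim

theorem AsympAvgPO.ergodicPO {f : X → X} {x : ℕ → X} (hx : AsympAvgPO f x) {δ : ℝ}
    (hδ : 0 < δ) : ErgodicPO f δ x :=
  densityZero_of_tendsto_cesaro (fun _ => dist_nonneg) hx hδ

theorem stmt8_general {X : Type*} [MetricSpace X] (f : X → X)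
    (h : MeanErgodicShadowing f) : WeakAsympAvgShadowing f := by
  intro ε hε x hx
  obtain ⟨δ, hδ, hshadow⟩ := h ε hε
  exact hshadow x (hx.ergodicPO hδ)

theorem stmt8 {X : Type*} [MetricSpace X] [CompactSpace X] (f : X → X)
    (hf : Continuous f) (h : MeanErgodicShadowing f) : WeakAsympAvgShadowing f :=
  stmt8_general f h
end

section
/- Let X be a compact metric space and f : X → X continuous. If f has the mean ergodic shadowing property, then f has the M_α-shadowing property for every α ∈ (0,1). -/
open Filter Metric

variable {X : Type*} [MetricSpace X]

theorem stmt10 {X : Type*} [MetricSpace X] [CompactSpace X] (f : X → X)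
    (hf : Continuous f) (h : MeanErgodicShadowing f) :
    ∀ α ∈ Set.Ioo (0:ℝ) 1, MalphaShadowing f α := by
  classical
  intro α hα ε hε
  obtain ⟨hα0, hα1⟩ := hα
  have hε' : (0:ℝ) < ε * (1 - α) / 2 := by
    have : 0 < 1 - α := by linarith
    positivity
  obtain ⟨δ, hδ, hδ'⟩ := h (ε * (1 - α) / 2) hε'
  refine ⟨δ, hδ, ?_⟩
  intro x hx
  obtain ⟨z, hz⟩ := hδ' x hx
  refine ⟨z, ?_⟩
  set d : ℕ → ℝ := fun j => dist (f^[j] z) (x j) with hd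
  -- bound on distances
  obtain ⟨C, hC⟩ := Metric.isBounded_iff.mp (isCompact_univ (X := X)).isBounded
  have hCd : ∀ j, d j ≤ max C 0 := fun j =>
    le_trans (hC (Set.mem_univ _) (Set.mem_univ _)) (le_max_left _ _)
  have hd0 : ∀ j, 0 ≤ d j := fun j => dist_nonneg
  have hbdd : Filter.IsBoundedUnder (· ≤ ·) Filter.atTop (cesaro d) := by
    refine Filter.isBoundedUnder_of ⟨max C 0, fun n => ?_⟩
    rcases Nat.eq_zero_or_pos n with rfl | hn
    · simp [cesaro, le_max_right]
    · have hsum : ∑ i ∈ Finset.range n, d i ≤ n * max C 0 := by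
        calc ∑ i ∈ Finset.range n, d i ≤ ∑ i ∈ Finset.range n, max C 0 :=
              Finset.sum_le_sum fun i _ => hCd i
          _ = n * max C 0 := by simp [Finset.sum_const, nsmul_eq_mul]
      have hn' : (0:ℝ) < n := by exact_mod_cast hn
      rw [cesaro, div_le_iff₀ hn']
      linarith [hsum]
  have hev : ∀ᶠ n in Filter.atTop, cesaro d n < ε * (1 - α) / 2 :=
    Filter.eventually_lt_of_limsup_lt hz hbdd
  -- per-n estimate
  have key : ∀ᶠ n in Filter.atTop,
      (1 + α) / 2 ≤ (((Finset.range n).filter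
        (· ∈ {j | dist (f^[j] z) (x j) < ε})).card : ℝ) / n := by
    filter_upwards [hev, Filter.eventually_ge_atTop 1] with n hcn hn1
    have hn' : (0:ℝ) < n := by exact_mod_cast hn1
    set A := (Finset.range n).filter (· ∈ {j | dist (f^[j] z) (x j) < ε}) with hA
    set B := (Finset.range n).filter
      (fun j => ¬ (j ∈ {j | dist (f^[j] z) (x j) < ε})) with hB
    have hAB : A.card + B.card = n := by
      rw [hA, hB, Finset.card_filter_add_card_filter_not, Finset.card_range]
    have hcheb : ε * B.card ≤ ∑ i ∈ Finset.range n, d i := by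
      calc ε * B.card = ∑ _j ∈ B, ε := by
            rw [Finset.sum_const, nsmul_eq_mul]; ring
        _ ≤ ∑ j ∈ B, d j := by
            refine Finset.sum_le_sum fun j hj => ?_
            rw [hB, Finset.mem_filter] at hj
            have := hj.2
            simp only [Set.mem_setOf_eq, not_lt] at this
            exact this
        _ ≤ ∑ i ∈ Finset.range n, d i :=
            Finset.sum_le_sum_of_subset_of_nonneg (Finset.filter_subset _ _)
              (fun j _ _ => hd0 j)
    have hcn' : ∑ i ∈ Finset.range n, d i < (ε * (1 - α) / 2) * n := by
      have := hcn
      rw [cesaro, div_lt_iff₀ hn'] at this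
      exact this
    -- so ε * B.card < ε * (1-α)/2 * n, hence B.card/n < (1-α)/2
    have hBlt : (B.card : ℝ) < (1 - α) / 2 * n := by
      have h1 : ε * (B.card : ℝ) < ε * ((1 - α) / 2 * n) := by
        calc ε * (B.card : ℝ) ≤ ∑ i ∈ Finset.range n, d i := hcheb
          _ < (ε * (1 - α) / 2) * n := hcn'
          _ = ε * ((1 - α) / 2 * n) := by ring
      exact lt_of_mul_lt_mul_left h1 (le_of_lt hε)
    have hAcard : (A.card : ℝ) = n - B.card := by
      have : (A.card : ℝ) + B.card = n := by exact_mod_cast hAB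
      linarith
    have hmain : (1 + α) / 2 ≤ (A.card : ℝ) / n := by
      rw [hAcard, le_div_iff₀ hn']
      nlinarith [hBlt]
    convert hmain using 4
    ext j; simp [hA]
  -- conclude via liminf
  have hcob : Filter.IsCoboundedUnder (· ≥ ·) Filter.atTop
      (fun n => (((Finset.range n).filter
        (· ∈ {j | dist (f^[j] z) (x j) < ε})).card : ℝ) / n) := by
    refine Filter.IsBoundedUnder.isCoboundedUnder_ge ⟨1, ?_⟩
    refine Filter.eventually_map.mpr (Filter.Eventually.of_forall fun n => ?_)
    rcases Nat.eq_zero_or_pos n with rfl | hn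
    · simp
    · have hn' : (0:ℝ) < n := by exact_mod_cast hn
      rw [div_le_one hn']
      exact_mod_cast Finset.card_filter_le _ _ |>.trans (by simp)
  have hfin : (1 + α) / 2 ≤ lowerDens {j | dist (f^[j] z) (x j) < ε} :=
    Filter.le_liminf_of_le hcob key
  linarith
end

section
/- Let X be a compact metric space and f : X → X continuous. If f has the M_α-shadowing property for every α ∈ (0,1), then f has the mean ergodic shadowing property. -/
open Filter Metric

variable {X : Type*} [MetricSpace X]

/-! If `z` is `ε/2`-close to the pseudo orbit on a set of lower density `> α`, then the
distances `dist (f^[j] z) (x j)` are below `ε/2` there and below `diam X` elsewhere, so their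
Cesàro averages are eventually at most `ε/2 + diam X * (1 - α)`. Choosing `α` close to `1`
makes this smaller than `ε`. -/

open Finset Topology

lemma sum_le_card_filter_mul_add {ι : Type*} {s : Finset ι} {a : ι → ℝ} {p : ι → Prop}
    [DecidablePred p] {η D : ℝ} (hp : ∀ j ∈ s, p j → a j ≤ η) (hD : ∀ j ∈ s, a j ≤ D) :
    ∑ j ∈ s, a j ≤ #(s.filter p) * η + (#s - #(s.filter p)) * D := by
  calc ∑ j ∈ s, a j ≤ ∑ j ∈ s, if p j then η else D :=
        sum_le_sum fun j hj => by split_ifs with hpj <;> [exact hp j hj hpj; exact hD j hj]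
    _ = #(s.filter p) * η + #(s.filter (¬ p ·)) * D := by
        rw [sum_ite, sum_const, sum_const, nsmul_eq_mul, nsmul_eq_mul]
    _ = #(s.filter p) * η + (#s - #(s.filter p)) * D := by
        rw [← card_filter_add_card_filter_not (s := s) p]
        push_cast
        ring

lemma limsup_cesaro_le_of_lt_lowerDens {a : ℕ → ℝ} {A : Set ℕ} {η D α : ℝ}
    (ha : ∀ j, 0 ≤ a j) (hD : ∀ j, a j ≤ D) (hη : 0 ≤ η) (hA : ∀ j ∈ A, a j ≤ η)
    (hα : α < lowerDens A) :
    limsup (cesaro a) atTop ≤ η + D * (1 - α) := by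
  classical
  set k : ℕ → ℕ := fun n => #((range n).filter (· ∈ A))
  have hD0 : 0 ≤ D := (ha 0).trans (hD 0)
  have hdens : ∀ᶠ n in atTop, α < (k n : ℝ) / n :=
    eventually_lt_of_lt_liminf (show α < liminf (fun n => (k n : ℝ) / n) atTop from hα)
      ⟨0, eventually_map.mpr (.of_forall fun n => by positivity)⟩
  have hcesaro : ∀ᶠ n in atTop, cesaro a n ≤ η + D * (1 - α) := by
    filter_upwards [hdens, eventually_ge_atTop 1] with n hkα hn
    have hn0 : (0 : ℝ) < n := by exact_mod_cast hn
    have hαk : α * n < k n := (lt_div_iff₀ hn0).mp hkα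
    have hkn : (k n : ℝ) ≤ n := by exact_mod_cast (card_filter_le _ _).trans (card_range n).le
    have hsum := sum_le_card_filter_mul_add (s := range n) (p := (· ∈ A))
      (fun j _ => hA j) (fun j _ => hD j)
    rw [card_range] at hsum
    rw [cesaro, div_le_iff₀ hn0]
    nlinarith [mul_nonneg hη (sub_nonneg.mpr hkn), mul_nonneg hD0 (sub_pos.mpr hαk).le]
  have hcesaro_nonneg : ∀ n, 0 ≤ cesaro a n := fun n =>
    div_nonneg (sum_nonneg fun j _ => ha j) n.cast_nonneg
  exact limsup_le_of_le (isBoundedUnder_of ⟨0, hcesaro_nonneg⟩).isCoboundedUnder_le hcesaro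

lemma exists_mem_Ioo_mul_one_sub_lt (D : ℝ) {η : ℝ} (hη : 0 < η) :
    ∃ α ∈ Set.Ioo (0 : ℝ) 1, D * (1 - α) < η := by
  have hlim : Tendsto (fun α : ℝ => D * (1 - α)) (𝓝[<] 1) (𝓝 0) := by
    have : Tendsto (fun α : ℝ => D * (1 - α)) (𝓝 1) (𝓝 (D * (1 - 1))) :=
      (continuous_const.mul (continuous_const.sub continuous_id)).tendsto 1
    simpa using this.mono_left nhdsWithin_le_nhds
  have hIoo : ∀ᶠ α in 𝓝[<] (1 : ℝ), α ∈ Set.Ioo 0 1 := Ioo_mem_nhdsLT one_pos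
  exact (hIoo.and (hlim.eventually (gt_mem_nhds hη))).exists

theorem stmt11_general {X : Type*} [MetricSpace X] [CompactSpace X] (f : X → X)
    (h : ∀ α ∈ Set.Ioo (0:ℝ) 1, MalphaShadowing f α) :
    MeanErgodicShadowing f := by
  intro ε hε
  have hdiam : ∀ p q : X, dist p q ≤ diam (Set.univ : Set X) := fun p q =>
    dist_le_diam_of_mem isCompact_univ.isBounded (Set.mem_univ p) (Set.mem_univ q)
  obtain ⟨α, hα, hαε⟩ := exists_mem_Ioo_mul_one_sub_lt (diam (Set.univ : Set X)) (half_pos hε)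
  obtain ⟨δ, hδ, hshadow⟩ := h α hα (ε / 2) (half_pos hε)
  refine ⟨δ, hδ, fun x hx => ?_⟩
  obtain ⟨z, hz⟩ := hshadow x hx
  refine ⟨z, (limsup_cesaro_le_of_lt_lowerDens (fun _ => dist_nonneg) (fun _ => hdiam _ _)
    (half_pos hε).le (fun _ hj => le_of_lt hj) hz).trans_lt ?_⟩
  linarith

theorem stmt11 {X : Type*} [MetricSpace X] [CompactSpace X] (f : X → X)
    (hf : Continuous f) (h : ∀ α ∈ Set.Ioo (0:ℝ) 1, MalphaShadowing f α) :
    MeanErgodicShadowing f :=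
  stmt11_general f h
end

section
/- Let X be a compact metric space, f : X → X continuous, and suppose points z_m ∈ X satisfy limsup_{n→∞} (1/n)·∑_{i=0}^{n-1} d(f^i(z_m), x_i) < ε/2^m for all m, for a fixed sequence (x_i) in X and a fixed ε > 0, and suppose moreover that there is z ∈ X and a subsequence (z_{m_k}) with sup_{i∈ℕ} d(f^i(z_{m_k}), f^i(z)) < ε/2^k for all k. Then lim_{n→∞} (1/n)·∑_{i=0}^{n-1} d(f^i(z), x_i) = 0. -/
open Filter Metric

theorem stmt16 {X : Type*} [MetricSpace X] [CompactSpace X] (f : X → X)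
    (hf : Continuous f) (x : ℕ → X) (ε : ℝ) (hε : 0 < ε) (z : ℕ → X)
    (hz : ∀ m : ℕ,
      Filter.limsup (cesaro (fun i => dist (f^[i] (z m)) (x i))) Filter.atTop < ε / 2 ^ m)
    (w : X) (m : ℕ → ℕ) (hm : StrictMono m)
    (hsub : ∀ k : ℕ, (⨆ i, dist (f^[i] (z (m k))) (f^[i] w)) < ε / 2 ^ k) :
    Filter.Tendsto (cesaro (fun i => dist (f^[i] w) (x i))) Filter.atTop (nhds 0) := by
  obtain ⟨C, hC⟩ : ∃ C : ℝ, ∀ a b : X, dist a b ≤ C := by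
    obtain ⟨C, hC⟩ := Metric.isBounded_iff.mp (isCompact_univ (X := X)).isBounded
    exact ⟨C, fun a b => hC (Set.mem_univ a) (Set.mem_univ b)⟩
  have hC0 : 0 ≤ C := le_trans dist_nonneg (hC w w)
  set u := cesaro (fun i => dist (f^[i] w) (x i)) with hu
  have hunn : ∀ n, 0 ≤ u n := fun n =>
    div_nonneg (Finset.sum_nonneg fun i _ => dist_nonneg) (Nat.cast_nonneg n)
  have hub : ∀ n, u n ≤ C := by
    intro n
    rcases Nat.eq_zero_or_pos n with h | h
    · simp [hu, cesaro, h, hC0]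
    · rw [hu]; show (∑ i ∈ Finset.range n, dist (f^[i] w) (x i)) / n ≤ C
      rw [div_le_iff₀ (by positivity)]
      calc ∑ i ∈ Finset.range n, dist (f^[i] w) (x i) ≤ ∑ _i ∈ Finset.range n, C :=
            Finset.sum_le_sum fun i _ => hC _ _
        _ = C * n := by simp [mul_comm]
  have hbdd : Filter.IsBoundedUnder (· ≤ ·) Filter.atTop u :=
    Filter.isBoundedUnder_of ⟨C, hub⟩
  have hbdd' : Filter.IsBoundedUnder (· ≥ ·) Filter.atTop u :=
    Filter.isBoundedUnder_of ⟨0, hunn⟩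
  have key : ∀ k, Filter.limsup u Filter.atTop ≤ ε / 2 ^ k + ε / 2 ^ k := by
    intro k
    set c := ε / 2 ^ k with hc
    set v := cesaro (fun i => dist (f^[i] (z (m k))) (x i)) with hv
    have hvnn : ∀ n, 0 ≤ v n := fun n =>
      div_nonneg (Finset.sum_nonneg fun i _ => dist_nonneg) (Nat.cast_nonneg n)
    have hvub : ∀ n, v n ≤ C := by
      intro n
      rcases Nat.eq_zero_or_pos n with h | h
      · simp [hv, cesaro, h, hC0]
      · rw [hv]; show (∑ i ∈ Finset.range n, dist (f^[i] (z (m k))) (x i)) / n ≤ C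
        rw [div_le_iff₀ (by positivity)]
        calc ∑ i ∈ Finset.range n, dist (f^[i] (z (m k))) (x i)
            ≤ ∑ _i ∈ Finset.range n, C := Finset.sum_le_sum fun i _ => hC _ _
          _ = C * n := by simp [mul_comm]
    have hmk : ε / 2 ^ (m k) ≤ c := by
      rw [hc]
      apply div_le_div_of_nonneg_left hε.le (by positivity)
      exact pow_le_pow_right₀ one_le_two (hm.le_apply)
    have hvlim : Filter.limsup v Filter.atTop < c := lt_of_lt_of_le (hz (m k)) hmk
    have hvev : ∀ᶠ n in Filter.atTop, v n < c :=
      Filter.eventually_lt_of_limsup_lt hvlim (Filter.isBoundedUnder_of ⟨C, hvub⟩)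
    have hdist : ∀ i, dist (f^[i] w) (x i) ≤ c + dist (f^[i] (z (m k))) (x i) := by
      intro i
      have h1 : dist (f^[i] w) (f^[i] (z (m k))) ≤ c := by
        rw [dist_comm]
        exact (le_ciSup ⟨C, by rintro _ ⟨j, rfl⟩; exact hC _ _⟩ i).trans (hsub k).le
      calc dist (f^[i] w) (x i)
          ≤ dist (f^[i] w) (f^[i] (z (m k))) + dist (f^[i] (z (m k))) (x i) :=
            dist_triangle _ _ _
        _ ≤ c + dist (f^[i] (z (m k))) (x i) := add_le_add_left h1 _
    have huv : ∀ n, u n ≤ c + v n := by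
      intro n
      rcases Nat.eq_zero_or_pos n with h | h
      · have : (0:ℝ) < c := by positivity
        simp [hu, hv, cesaro, h]
        linarith
      · have hn : (0:ℝ) < n := by exact_mod_cast h
        rw [hu, hv]
        show (∑ i ∈ Finset.range n, dist (f^[i] w) (x i)) / n ≤
          c + (∑ i ∈ Finset.range n, dist (f^[i] (z (m k))) (x i)) / n
        rw [div_le_iff₀ hn, add_mul, div_mul_cancel₀ _ hn.ne']
        calc ∑ i ∈ Finset.range n, dist (f^[i] w) (x i)
            ≤ ∑ i ∈ Finset.range n, (c + dist (f^[i] (z (m k))) (x i)) :=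
              Finset.sum_le_sum fun i _ => hdist i
          _ = n * c + ∑ i ∈ Finset.range n, dist (f^[i] (z (m k))) (x i) := by
              rw [Finset.sum_add_distrib, Finset.sum_const, Finset.card_range,
                nsmul_eq_mul]
          _ = c * n + ∑ i ∈ Finset.range n, dist (f^[i] (z (m k))) (x i) := by ring
    have huev : ∀ᶠ n in Filter.atTop, u n ≤ c + c := by
      filter_upwards [hvev] with n hn
      exact (huv n).trans (by linarith)
    exact Filter.limsup_le_of_le hbdd'.isCoboundedUnder_le huev
  have hls : Filter.limsup u Filter.atTop ≤ 0 := by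
    refine ge_of_tendsto' (x := (Filter.atTop : Filter ℕ)) (f := fun k : ℕ => ε / 2 ^ k + ε / 2 ^ k) ?_ key
    have : Filter.Tendsto (fun k : ℕ => ε / 2 ^ k) Filter.atTop (nhds 0) := by
      simpa [div_eq_mul_inv, ← inv_pow] using
        (tendsto_pow_atTop_nhds_zero_of_lt_one (by norm_num : (0:ℝ) ≤ 2⁻¹)
          (by norm_num : (2:ℝ)⁻¹ < 1)).const_mul ε
    simpa using this.add this
  have hli : (0:ℝ) ≤ Filter.liminf u Filter.atTop :=
    Filter.le_liminf_of_le hbdd.isCoboundedUnder_ge (Filter.Eventually.of_forall hunn)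
  have hlilim : Filter.liminf u Filter.atTop ≤ Filter.limsup u Filter.atTop :=
    Filter.liminf_le_limsup hbdd hbdd'
  have h1 : Filter.limsup u Filter.atTop = 0 := le_antisymm hls (hli.trans hlilim)
  have h2 : Filter.liminf u Filter.atTop = 0 := le_antisymm (hlilim.trans_eq h1) hli
  exact tendsto_of_liminf_eq_limsup h2 h1 hbdd hbdd'
end

section
/- Let D be the closed unit disk in ℝ², f_1(x,y) = (y,x), f_2(x,y) = (x/2,y/2), and let w = 1,2,1,2,… be the alternating word with f applied at time i being f_{w_i}. Then the nonautonomous system ((f_{w_i})_{i∈ℕ}) on D has the w-asymptotic average shadowing property: for every sequence ((x_i,y_i))_{i∈ℕ} in D with lim_{n→∞} (1/n)·∑_{i=0}^{n-1} d(f_{w_i}(x_i,y_i), (x_{i+1},y_{i+1})) = 0, there exists a true orbit ((a_i,b_i))_{i∈ℕ} (i.e., (a_{i+1},b_{i+1}) = f_{w_i}(a_i,b_i)) such that lim_{n→∞} (1/n)·∑_{i=0}^{n-1} d((a_i,b_i),(x_i,y_i)) = 0. -/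
open Filter Metric

noncomputable section

abbrev E2 := EuclideanSpace ℝ (Fin 2)

def diskD : Set E2 := Metric.closedBall 0 1

def f1 : E2 → E2 := fun p => WithLp.toLp 2 ![p 1, p 0]

def f2 : E2 → E2 := fun p => (1 / 2 : ℝ) • p

/-- The alternating word w = 1,2,1,2,…: apply `f1` at even times and `f2` at odd times. -/
def fw (i : ℕ) : E2 → E2 := if i % 2 = 0 then f1 else f2

/-- The nonautonomous iterate `f_w^n = f_{w_{n-1}} ∘ ⋯ ∘ f_{w_0}`. -/
def fwIter : ℕ → E2 → E2
  | 0 => id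
  | n + 1 => fun p => fw n (fwIter n p)

end

lemma f1_dist (p q : E2) : dist (f1 p) (f1 q) = dist p q := by
  simp [f1, EuclideanSpace.dist_eq, Fin.sum_univ_two, add_comm]

lemma f2_dist (p q : E2) : dist (f2 p) (f2 q) = (1/2) * dist p q := by
  simp [f2, dist_smul₀]

lemma f1_zero : f1 (0 : E2) = 0 := by
  ext i; fin_cases i <;> simp [f1]

lemma f1_mem {p : E2} (hp : p ∈ diskD) : f1 p ∈ diskD := by
  simp only [diskD, mem_closedBall, dist_zero_right] at *
  calc ‖f1 p‖ = dist (f1 p) (f1 0) := by rw [f1_zero, dist_zero_right]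
    _ = dist p 0 := f1_dist p 0
    _ ≤ 1 := by simpa using hp

lemma f2_mem {p : E2} (hp : p ∈ diskD) : f2 p ∈ diskD := by
  simp only [diskD, mem_closedBall, dist_zero_right] at *
  calc ‖f2 p‖ = dist (f2 p) (f2 0) := by simp [f2]
    _ = (1/2) * dist p 0 := f2_dist p 0
    _ ≤ 1 := by rw [dist_zero_right]; nlinarith

theorem stmt19 (x : ℕ → E2) (hx : ∀ i, x i ∈ diskD)
    (hpo : Filter.Tendsto (cesaro (fun i => dist (fw i (x i)) (x (i + 1))))
      Filter.atTop (nhds 0)) :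
    ∃ a : ℕ → E2, (∀ i, a i ∈ diskD) ∧ (∀ i, a (i + 1) = fw i (a i)) ∧
      Filter.Tendsto (cesaro (fun i => dist (a i) (x i))) Filter.atTop (nhds 0) := by
  set a : ℕ → E2 := fun i => fwIter i (x 0) with ha
  have horb : ∀ i, a (i + 1) = fw i (a i) := fun i => rfl
  have hmem : ∀ i, a i ∈ diskD := by
    intro i
    induction i with
    | zero => exact hx 0
    | succ n ih =>
      rw [horb n, fw]
      split
      · exact f1_mem ih
      · exact f2_mem ih
  refine ⟨a, hmem, horb, ?_⟩
  set e : ℕ → ℝ := fun i => dist (a i) (x i) with he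
  set α : ℕ → ℝ := fun i => dist (fw i (x i)) (x (i + 1)) with hα
  -- one-step estimate
  have hstep : ∀ n, e (n + 1) ≤ (if n % 2 = 0 then 1 else (1:ℝ)/2) * e n + α n := by
    intro n
    have h1 : e (n + 1) ≤ dist (fw n (a n)) (fw n (x n)) + α n := by
      have := dist_triangle (a (n+1)) (fw n (x n)) (x (n+1))
      rw [horb n] at *
      exact this
    rcases Nat.even_or_odd n with hn | hn
    · have hmod : n % 2 = 0 := Nat.even_iff.mp hn
      rw [fw, if_pos hmod] at h1
      rw [if_pos hmod, one_mul]
      calc e (n+1) ≤ dist (f1 (a n)) (f1 (x n)) + α n := h1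
        _ = e n + α n := by rw [f1_dist]
    · have hmod : n % 2 = 1 := Nat.odd_iff.mp hn
      rw [fw, if_neg (by omega)] at h1
      rw [if_neg (by omega)]
      calc e (n+1) ≤ dist (f2 (a n)) (f2 (x n)) + α n := h1
        _ = (1/2) * e n + α n := by rw [f2_dist]
  have he0 : e 0 = 0 := by simp [he, ha, fwIter]
  have hαnn : ∀ i, 0 ≤ α i := fun i => dist_nonneg
  have henn : ∀ i, 0 ≤ e i := fun i => dist_nonneg
  -- invariant: Σ_{i<n} e i + c n * e n ≤ 4 Σ_{i<n} α i, c n = 4 if n even else 3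
  have key : ∀ n, (∑ i ∈ Finset.range n, e i) + (if n % 2 = 0 then (4:ℝ) else 3) * e n
      ≤ 4 * ∑ i ∈ Finset.range n, α i := by
    intro n
    induction n with
    | zero => simp [he0]
    | succ n ih =>
      rw [Finset.sum_range_succ, Finset.sum_range_succ (f := α)]
      have hs := hstep n
      rcases Nat.even_or_odd n with hn | hn
      · have hmod : n % 2 = 0 := Nat.even_iff.mp hn
        have hmod1 : (n+1) % 2 = 1 := by omega
        rw [if_pos hmod] at ih
        rw [if_pos hmod, one_mul] at hs
        rw [if_neg (by omega)]
        linarith [henn (n+1), hαnn n]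
      · have hmod : n % 2 = 1 := Nat.odd_iff.mp hn
        rw [if_neg (by omega)] at ih
        rw [if_neg (by omega)] at hs
        rw [if_pos (by omega)]
        linarith [henn (n+1), henn n, hαnn n]
  have hbound : ∀ n, cesaro e n ≤ 4 * cesaro α n := by
    intro n
    have h1 : (∑ i ∈ Finset.range n, e i) ≤ 4 * ∑ i ∈ Finset.range n, α i := by
      have := key n
      have hc : 0 ≤ (if n % 2 = 0 then (4:ℝ) else 3) * e n := by
        positivity
      linarith
    simp only [cesaro]
    rw [← mul_div_assoc]
    rcases Nat.eq_zero_or_pos n with h | h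
    · simp [h]
    · have hn : (0:ℝ) < n := by exact_mod_cast h
      gcongr
  have hnn : ∀ n, 0 ≤ cesaro e n := fun n =>
    div_nonneg (Finset.sum_nonneg fun i _ => henn i) (Nat.cast_nonneg n)
  have hlim : Filter.Tendsto (fun n => 4 * cesaro α n) Filter.atTop (nhds 0) := by
    simpa using hpo.const_mul 4
  exact squeeze_zero hnn hbound hlim
end
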